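/- (Per-iteration regret inequality; claim in the proof of Lemma 7.) Let ŵ, w ∈ R^d be unit vectors, let X ∈ R^{d×d} be symmetric, let η > 0 and α ≥ 0 with ηα < 1, and set W := (1 − ηα) ŵ ŵ^⊤ + η X. Suppose there is a unit vector w' such that w' w'^⊤ = Π_S[W], and let ŵ' be a unit vector with ‖ŵ' ŵ'^⊤ − w' w'^⊤‖_F ≤ γ. Then (w w^⊤ − ŵ ŵ^⊤) • X ≤ (1/(2η)) · ( (1 − ηα) ‖ŵ ŵ^⊤ − w w^⊤‖_F^2 − ‖ŵ' ŵ'^⊤ − w w^⊤‖_F^2 ) + (3√2/2)·(γ/η) + (η/2)·‖X − α ŵ ŵ^⊤‖_F^2, where A • B := trace(A^⊤ B) denotes the Frobenius inner product. -/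

import Mathlib

open Matrix MeasureTheory ProbabilityTheory BigOperators

/-- The `k`-th largest eigenvalue (0-indexed: `eigk 0` is the largest) of a real
matrix, defined via the sorted eigenvalues of a Hermitian (= symmetric) matrix. -/
noncomputable def eigk {d : ℕ} (k : ℕ) (A : Matrix (Fin d) (Fin d) ℝ) : ℝ :=
  if h : k < d then
    (if hA : A.IsHermitian then
      (hA.eigenvalues ∘ Tuple.sort hA.eigenvalues) (Fin.rev ⟨k, h⟩) else 0)
  else 0

/-- Euclidean norm of a vector in `ℝ^d`. -/
noncomputable def vnorm {d : ℕ} (v : Fin d → ℝ) : ℝ := Real.sqrt (v ⬝ᵥ v)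

/-- Frobenius norm of a `d × d` real matrix. -/
noncomputable def frob {d : ℕ} (A : Matrix (Fin d) (Fin d) ℝ) : ℝ :=
  Real.sqrt (∑ i, ∑ j, (A i j)^2)

/-- Spectral norm (largest singular value) of a `d × d` real matrix, as the
supremum of `‖A v‖` over unit vectors `v`. -/
noncomputable def spec {d : ℕ} (A : Matrix (Fin d) (Fin d) ℝ) : ℝ :=
  sSup {r : ℝ | ∃ v : Fin d → ℝ, vnorm v = 1 ∧ r = vnorm (A.mulVec v)}

/-- The spectrahedron: positive semidefinite matrices of unit trace. -/
def Spectrahedron (d : ℕ) : Set (Matrix (Fin d) (Fin d) ℝ) :=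
  {M | M.PosSemidef ∧ M.trace = 1}

/-- `P` is the Euclidean (Frobenius-norm) projection of `W` onto the spectrahedron. -/
def IsProjSpectrahedron {d : ℕ} (W P : Matrix (Fin d) (Fin d) ℝ) : Prop :=
  P ∈ Spectrahedron d ∧ ∀ M ∈ Spectrahedron d, frob (P - W) ≤ frob (M - W)

/-!
Write `H, Z, P, H'` for `ŵŵᵀ, wwᵀ, w'w'ᵀ, ŵ'ŵ'ᵀ` and flatten matrices into Euclidean space, where
the Frobenius norm and inner product become the Euclidean ones. Since `‖H‖ = ‖Z‖`, expanding the
square of `W - Z = (H - Z) + η (X - α H)` gives the exact identity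
`2η (Z - H) • X = (1 - ηα) ‖H - Z‖² - ‖W - Z‖² + η² ‖X - α H‖²`.
Projecting onto the convex set `S ∋ Z` does not increase the distance to `Z`, so `‖W - Z‖` may be
replaced by `‖P - Z‖`. Finally, unit rank-one projectors lie within `√2` of each other, so moving
from `P` to `H'` raises the squared distance to `Z` by at most `3√2 γ`.
-/

open scoped RealInnerProductSpace

theorem norm_add_sq_le_of_norm_le {E : Type*} [SeminormedAddCommGroup E] {a b : E} {γ c : ℝ}
    (haγ : ‖a‖ ≤ γ) (hac : ‖a‖ ≤ c) (hbc : ‖b‖ ≤ c) : ‖a + b‖ ^ 2 ≤ ‖b‖ ^ 2 + 3 * c * γ := by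
  have ha := norm_nonneg a
  have hb := norm_nonneg b
  have htri : ‖a + b‖ ^ 2 ≤ (‖a‖ + ‖b‖) ^ 2 :=
    pow_le_pow_left₀ (norm_nonneg _) (norm_add_le a b) 2
  nlinarith [mul_le_mul hac haγ ha (ha.trans hac), mul_le_mul haγ hbc hb (ha.trans haγ)]

section InnerProductSpace

variable {E : Type*} [NormedAddCommGroup E] [InnerProductSpace ℝ E]

theorem norm_sub_le_norm_sub_of_isMinOn {K : Set E} (hK : Convex ℝ K) {W P Z : E}
    (hP : P ∈ K) (hmin : IsMinOn (fun M => ‖M - W‖) K P) (hZ : Z ∈ K) :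
    ‖P - Z‖ ≤ ‖W - Z‖ := by
  have : Nonempty K := ⟨⟨P, hP⟩⟩
  have hinf : ‖W - P‖ = ⨅ M : K, ‖W - M‖ := by
    refine le_antisymm (le_ciInf fun M => ?_) (ciInf_le ⟨0, ?_⟩ (⟨P, hP⟩ : K))
    · simpa only [norm_sub_rev W] using isMinOn_iff.1 hmin M M.2
    · rintro _ ⟨M, rfl⟩; positivity
  have hobtuse : ⟪W - P, Z - P⟫ ≤ 0 := (norm_eq_iInf_iff_real_inner_le_zero hK hP).1 hinf Z hZ
  have hexpand : ‖W - Z‖ ^ 2 = ‖W - P‖ ^ 2 - 2 * ⟪W - P, Z - P⟫ + ‖Z - P‖ ^ 2 := by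
    rw [← norm_sub_sq_real, sub_sub_sub_cancel_right]
  refine le_of_pow_le_pow_left₀ two_ne_zero (norm_nonneg _) ?_
  rw [norm_sub_rev P Z]
  nlinarith [sq_nonneg ‖W - P‖]

theorem norm_sub_le_sqrt_two_of_inner_nonneg {a b : E} (ha : ‖a‖ = 1) (hb : ‖b‖ = 1)
    (hab : 0 ≤ ⟪a, b⟫) : ‖a - b‖ ≤ √2 := by
  refine Real.le_sqrt_of_sq_le ?_
  rw [norm_sub_sq_real, ha, hb]
  linarith

theorem two_mul_inner_sub_eq {H Z : E} (hHZ : ‖H‖ = ‖Z‖) (X : E) (η α : ℝ) :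
    2 * η * ⟪Z - H, X⟫ = (1 - η * α) * ‖H - Z‖ ^ 2 - ‖(1 - η * α) • H + η • X - Z‖ ^ 2
      + η ^ 2 * ‖X - α • H‖ ^ 2 := by
  have hsq : ⟪H, H⟫ = ⟪Z, Z⟫ := by
    rw [real_inner_self_eq_norm_sq, real_inner_self_eq_norm_sq, hHZ]
  simp only [← real_inner_self_eq_norm_sq, inner_sub_left, inner_sub_right, inner_add_left,
    inner_add_right, real_inner_smul_left, real_inner_smul_right, real_inner_comm H Z,
    real_inner_comm H X, real_inner_comm Z X]
  linear_combination (-η * α) * hsq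

theorem inner_sub_le_of_projection_step {H Z X P H' : E} {η α γ c : ℝ} (hη : 0 < η)
    (hHZ : ‖H‖ = ‖Z‖) (hP : ‖P - Z‖ ≤ ‖(1 - η * α) • H + η • X - Z‖) (hγ : ‖H' - P‖ ≤ γ)
    (hH'P : ‖H' - P‖ ≤ c) (hPZ : ‖P - Z‖ ≤ c) :
    ⟪Z - H, X⟫ ≤ 1 / (2 * η) * ((1 - η * α) * ‖H - Z‖ ^ 2 - ‖H' - Z‖ ^ 2)
      + 3 * c / 2 * (γ / η) + η / 2 * ‖X - α • H‖ ^ 2 := by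
  have hregret := two_mul_inner_sub_eq hHZ X η α
  have hproj := pow_le_pow_left₀ (norm_nonneg _) hP 2
  have hperturb : ‖H' - Z‖ ^ 2 ≤ ‖P - Z‖ ^ 2 + 3 * c * γ := by
    simpa only [sub_add_sub_cancel] using norm_add_sq_le_of_norm_le hγ hH'P hPZ
  have hrhs : 1 / (2 * η) * ((1 - η * α) * ‖H - Z‖ ^ 2 - ‖H' - Z‖ ^ 2)
      + 3 * c / 2 * (γ / η) + η / 2 * ‖X - α • H‖ ^ 2
      = ((1 - η * α) * ‖H - Z‖ ^ 2 - ‖H' - Z‖ ^ 2 + 3 * c * γ + η ^ 2 * ‖X - α • H‖ ^ 2)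
        / (2 * η) := by
    field_simp
  rw [hrhs, le_div_iff₀ (by positivity)]
  linarith

end InnerProductSpace

namespace Matrix

section Flatten

variable {m n : Type*}

def frobeniusFlatten : Matrix m n ℝ →ₗ[ℝ] EuclideanSpace ℝ (m × n) where
  toFun A := WithLp.toLp 2 fun p => A p.1 p.2
  map_add' _ _ := rfl
  map_smul' _ _ := rfl

@[simp]
theorem frobeniusFlatten_apply (A : Matrix m n ℝ) (p : m × n) :
    frobeniusFlatten A p = A p.1 p.2 :=
  rfl

variable [Fintype m] [Fintype n]

theorem trace_transpose_mul_eq_inner (A B : Matrix m n ℝ) :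
    trace (Aᵀ * B) = ⟪frobeniusFlatten A, frobeniusFlatten B⟫ := by
  simp only [trace, diag_apply, mul_apply, transpose_apply, PiLp.inner_apply,
    frobeniusFlatten_apply, Fintype.sum_prod_type, RCLike.inner_apply, conj_trivial]
  rw [Finset.sum_comm]
  simp_rw [mul_comm]

theorem inner_frobeniusFlatten_vecMulVec (u v : n → ℝ) :
    ⟪frobeniusFlatten (vecMulVec u u), frobeniusFlatten (vecMulVec v v)⟫ = (u ⬝ᵥ v) ^ 2 := by
  simp only [PiLp.inner_apply, frobeniusFlatten_apply, Fintype.sum_prod_type, vecMulVec_apply,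
    RCLike.inner_apply, conj_trivial, dotProduct, sq, Finset.sum_mul_sum]
  exact Fintype.sum_congr _ _ fun i => Fintype.sum_congr _ _ fun j => by ring

theorem norm_frobeniusFlatten_vecMulVec_self (u : n → ℝ) :
    ‖frobeniusFlatten (vecMulVec u u)‖ = u ⬝ᵥ u := by
  rw [norm_eq_sqrt_real_inner, inner_frobeniusFlatten_vecMulVec,
    Real.sqrt_sq (by simpa using dotProduct_self_star_nonneg u)]

theorem norm_frobeniusFlatten_vecMulVec_sub_le_sqrt_two {u v : n → ℝ} (hu : u ⬝ᵥ u = 1)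
    (hv : v ⬝ᵥ v = 1) :
    ‖frobeniusFlatten (vecMulVec u u) - frobeniusFlatten (vecMulVec v v)‖ ≤ √2 := by
  refine norm_sub_le_sqrt_two_of_inner_nonneg ?_ ?_ ?_
  · rw [norm_frobeniusFlatten_vecMulVec_self, hu]
  · rw [norm_frobeniusFlatten_vecMulVec_self, hv]
  · rw [inner_frobeniusFlatten_vecMulVec]
    positivity

end Flatten

end Matrix

theorem frob_eq_norm_frobeniusFlatten {d : ℕ} (A : Matrix (Fin d) (Fin d) ℝ) :
    frob A = ‖frobeniusFlatten A‖ := by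
  simp [frob, EuclideanSpace.norm_eq, Fintype.sum_prod_type]

theorem convex_spectrahedron (d : ℕ) : Convex ℝ (Spectrahedron d) :=
  fun _ hP _ hZ _ _ ha hb hab =>
    ⟨(hP.1.smul ha).add (hZ.1.smul hb), by simp [trace_add, trace_smul, hP.2, hZ.2, hab]⟩

theorem vecMulVec_self_mem_spectrahedron {d : ℕ} {v : Fin d → ℝ} (hv : v ⬝ᵥ v = 1) :
    vecMulVec v v ∈ Spectrahedron d :=
  ⟨by simpa using posSemidef_vecMulVec_self_star v, by rw [trace_vecMulVec, hv]⟩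

theorem vnorm_eq_one_iff {d : ℕ} {v : Fin d → ℝ} : vnorm v = 1 ↔ v ⬝ᵥ v = 1 :=
  Real.sqrt_eq_one

theorem per_iteration_regret_inequality_general {d : ℕ}
    (wh w : Fin d → ℝ) (hwh : vnorm wh = 1) (hw : vnorm w = 1)
    (X : Matrix (Fin d) (Fin d) ℝ)
    (η α : ℝ) (hη : 0 < η)
    (W : Matrix (Fin d) (Fin d) ℝ)
    (hW : W = (1 - η * α) • vecMulVec wh wh + η • X)
    (w' : Fin d → ℝ) (hw' : vnorm w' = 1)
    (hproj : IsProjSpectrahedron W (vecMulVec w' w'))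
    (wh' : Fin d → ℝ) (hwh' : vnorm wh' = 1)
    (γ : ℝ) (hγ : frob (vecMulVec wh' wh' - vecMulVec w' w') ≤ γ) :
    Matrix.trace ((vecMulVec w w - vecMulVec wh wh)ᵀ * X) ≤
      (1 / (2 * η)) * ((1 - η * α) * frob (vecMulVec wh wh - vecMulVec w w)^2
          - frob (vecMulVec wh' wh' - vecMulVec w w)^2)
        + (3 * Real.sqrt 2 / 2) * (γ / η)
        + (η / 2) * frob (X - α • vecMulVec wh wh)^2 := by
  rw [vnorm_eq_one_iff] at hwh hw hw' hwh'
  set F : Matrix (Fin d) (Fin d) ℝ →ₗ[ℝ] EuclideanSpace ℝ (Fin d × Fin d) := frobeniusFlatten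
  have hFproj : ‖F (vecMulVec w' w') - F (vecMulVec w w)‖ ≤ ‖F W - F (vecMulVec w w)‖ := by
    refine norm_sub_le_norm_sub_of_isMinOn ((convex_spectrahedron d).linear_image F)
      (Set.mem_image_of_mem F hproj.1) (isMinOn_iff.2 ?_)
      (Set.mem_image_of_mem F (vecMulVec_self_mem_spectrahedron hw))
    rintro _ ⟨M, hM, rfl⟩
    simpa only [frob_eq_norm_frobeniusFlatten, map_sub] using hproj.2 M hM
  rw [hW, map_add, map_smul, map_smul] at hFproj
  simp only [trace_transpose_mul_eq_inner, frob_eq_norm_frobeniusFlatten, map_sub, map_smul]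
    at hγ ⊢
  exact inner_sub_le_of_projection_step hη
    (by rw [norm_frobeniusFlatten_vecMulVec_self, norm_frobeniusFlatten_vecMulVec_self, hwh, hw])
    hFproj hγ (norm_frobeniusFlatten_vecMulVec_sub_le_sqrt_two hwh' hw')
    (norm_frobeniusFlatten_vecMulVec_sub_le_sqrt_two hw' hw)

/-- **Per-iteration regret inequality** (claim in the proof of Lemma 7). -/
theorem per_iteration_regret_inequality {d : ℕ}
    (wh w : Fin d → ℝ) (hwh : vnorm wh = 1) (hw : vnorm w = 1)
    (X : Matrix (Fin d) (Fin d) ℝ) (hXsymm : X.IsSymm)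
    (η α : ℝ) (hη : 0 < η) (hα : 0 ≤ α) (hηα : η * α < 1)
    (W : Matrix (Fin d) (Fin d) ℝ)
    (hW : W = (1 - η * α) • vecMulVec wh wh + η • X)
    (w' : Fin d → ℝ) (hw' : vnorm w' = 1)
    (hproj : IsProjSpectrahedron W (vecMulVec w' w'))
    (wh' : Fin d → ℝ) (hwh' : vnorm wh' = 1)
    (γ : ℝ) (hγ : frob (vecMulVec wh' wh' - vecMulVec w' w') ≤ γ) :
    Matrix.trace ((vecMulVec w w - vecMulVec wh wh)ᵀ * X) ≤
      (1 / (2 * η)) * ((1 - η * α) * frob (vecMulVec wh wh - vecMulVec w w)^2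
          - frob (vecMulVec wh' wh' - vecMulVec w w)^2)
        + (3 * Real.sqrt 2 / 2) * (γ / η)
        + (η / 2) * frob (X - α • vecMulVec wh wh)^2 :=
  per_iteration_regret_inequality_general wh w hwh hw X η α hη W hW w' hw' hproj wh' hwh' γ hγ
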